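/- Let $\hat a$ be a bounded measurable complex-valued function on $[0,2\pi)$ and $A = \mathcal{F}^{-1} M_{\hat a} \mathcal{F}$ on $\ell^2(\mathbb{Z})$. Then for every $n \ge 1$ and $k \in \{0,\ldots,n-1\}$, the diagonal entries of the discrete-Fourier-conjugated compression satisfy $(\mathcal{F}_n V_n^* A V_n \mathcal{F}_n^*)_{k,k} = (\widehat S_n \hat a)(2\pi k/n)$, where $\widehat S_n \hat a$ is the $n$-th Cesàro mean of the Fourier partial sums of $\hat a$. -/

import Mathlib

open MeasureTheory Finset Matrix

/-- Lebesgue measure restricted to `[0, 2π)`. -/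
noncomputable def μ2π : Measure ℝ := volume.restrict (Set.Ico 0 (2 * Real.pi))

/-- The `n×n` compression matrix `(V_n^* A V_n)_{j,l} = ⟨1_{j}, A 1_{l}⟩`. -/
noncomputable def compressMat (A : lp (fun _ : ℤ => ℂ) 2 →L[ℂ] lp (fun _ : ℤ => ℂ) 2)
    (n : ℕ) : Matrix (Fin n) (Fin n) ℂ :=
  fun j l => inner ℂ (lp.single 2 (j : ℤ) (1 : ℂ)) (A (lp.single 2 (l : ℤ) (1 : ℂ)))

/-- The `n`-dimensional discrete Fourier transform matrix. -/
noncomputable def dftMat (n : ℕ) : Matrix (Fin n) (Fin n) ℂ :=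
  fun j k => Complex.exp (2 * Real.pi * Complex.I * j * k / n) / Real.sqrt n

/-!
The isometry `F` intertwines `A` with multiplication by `a` and sends the standard basis vector
`δ_k` to `e^{ikx}/√(2π)`, so `⟪δ_j, A δ_l⟫` is the Fourier coefficient `c_{j-l}` of `a`: the
compression is a Toeplitz matrix. Conjugating it by the DFT, the `k`-th diagonal entry is
`(1/n) ∑_{j,l<n} e^{2πik(j-l)/n} c_{j-l}`, and each `m = j - l` with `|m| < n` occurs exactly
`n - |m|` times, which produces the Fejér weights.
-/

open Complex

noncomputable def fourierCoeffIco (a : ℝ → ℂ) (m : ℤ) : ℂ :=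
  1 / (2 * (Real.pi : ℂ)) * ∫ t, exp (-I * m * t) * a t ∂μ2π

theorem Complex.ofReal_sqrt_sq {x : ℝ} (hx : 0 ≤ x) : (Real.sqrt x : ℂ) ^ 2 = x := by
  rw [← ofReal_pow, Real.sq_sqrt hx]

theorem Complex.conj_exp_I_mul_intCast_mul_ofReal (j : ℤ) (x : ℝ) :
    starRingEnd ℂ (exp (I * j * x)) = exp (-I * j * x) := by
  rw [← exp_conj]
  simp [neg_mul]

theorem inner_single_map_single_eq_fourierCoeffIco (a : ℝ → ℂ)
    (F : lp (fun _ : ℤ => ℂ) 2 ≃ₗᵢ[ℂ] Lp ℂ 2 μ2π)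
    (hF : ∀ k : ℤ, (F (lp.single 2 k (1 : ℂ)) : ℝ → ℂ)
      =ᵐ[μ2π] fun x => exp (I * k * x) / Real.sqrt (2 * Real.pi))
    (A : lp (fun _ : ℤ => ℂ) 2 →L[ℂ] lp (fun _ : ℤ => ℂ) 2)
    (hA : ∀ ψ, (F (A ψ) : ℝ → ℂ) =ᵐ[μ2π] fun x => a x * (F ψ : ℝ → ℂ) x) (j l : ℤ) :
    inner ℂ (lp.single 2 j (1 : ℂ)) (A (lp.single 2 l (1 : ℂ))) = fourierCoeffIco a (j - l) := by
  rw [← F.inner_map_map, L2.inner_def, fourierCoeffIco, ← integral_const_mul]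
  refine integral_congr_ae ?_
  filter_upwards [hF j, hA (lp.single 2 l 1), hF l] with x hj hAl hl
  rw [RCLike.inner_apply', hj, hAl, hl, map_div₀, conj_exp_I_mul_intCast_mul_ofReal, conj_ofReal]
  have hexp : exp (-I * j * x) * exp (I * l * x) = exp (-I * (j - l : ℤ) * x) := by
    rw [← exp_add]; push_cast; ring_nf
  rw [← hexp]
  field_simp
  rw [ofReal_sqrt_sq (by positivity)]
  push_cast
  ring

theorem dftMat_mul_mul_conjTranspose_apply_self (n : ℕ) (M : Matrix (Fin n) (Fin n) ℂ)
    (k : Fin n) :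
    (dftMat n * M * (dftMat n)ᴴ) k k
      = ∑ j : Fin n, ∑ l : Fin n, exp (2 * Real.pi * I * k * (j - l) / n) * M j l / n := by
  simp only [mul_apply, conjTranspose_apply, sum_mul]
  rw [sum_comm]
  refine sum_congr rfl fun j _ => sum_congr rfl fun l _ => ?_
  have hconj : star (dftMat n k l) = exp (-(2 * Real.pi * I * k * l / n)) / Real.sqrt n := by
    rw [dftMat, star_def, map_div₀, ← exp_conj, conj_ofReal]
    simp [map_ofNat, neg_div]
  calc dftMat n k j * M j l * star (dftMat n k l)
      = exp (2 * Real.pi * I * k * j / n) * exp (-(2 * Real.pi * I * k * l / n)) * M j l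
          / (Real.sqrt n : ℂ) ^ 2 := by rw [hconj, dftMat]; ring
    _ = _ := by rw [← exp_add, ofReal_sqrt_sq n.cast_nonneg, ofReal_natCast]; ring_nf

theorem Fin.sum_univ_intCast_eq_sum_Ico {M : Type*} [AddCommMonoid M] (f : ℤ → M) (n : ℕ) :
    ∑ i : Fin n, f i = ∑ i ∈ Ico (0 : ℤ) n, f i := by
  rw [Fin.sum_univ_eq_sum_range (fun i => f i)]
  refine sum_nbij' (fun i => (i : ℤ)) Int.toNat ?_ ?_ ?_ ?_ ?_ <;> simp <;> omega

theorem sum_Ico_sub_eq_sum_Icc_ite {M : Type*} [AddCommMonoid M] (g : ℤ → M) {n j : ℤ}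
    (hj : j ∈ Ico 0 n) :
    ∑ l ∈ Ico 0 n, g (j - l)
      = ∑ m ∈ Icc (-n + 1) (n - 1), if j - m ∈ Ico 0 n then g m else 0 := by
  rw [← sum_filter]
  refine sum_nbij' (j - ·) (j - ·) ?_ ?_ ?_ ?_ ?_ <;> simp_all
  omega

theorem card_filter_sub_mem_Ico (n m : ℤ) (hm : m ∈ Icc (-n + 1) (n - 1)) :
    (#{j ∈ Ico 0 n | j - m ∈ Ico 0 n} : ℤ) = n - |m| := by
  have : {j ∈ Ico 0 n | j - m ∈ Ico 0 n} = Ico (max 0 m) (min n (m + n)) := by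
    ext j; simp only [mem_filter, mem_Ico, max_le_iff, lt_min_iff]; omega
  rw [this, Int.card_Ico]
  simp only [mem_Icc] at hm
  rcases abs_cases m with ⟨h, _⟩ | ⟨h, _⟩ <;> rw [h] <;> omega

theorem sum_Ico_sum_Ico_sub_eq_sum_Icc_zsmul {M : Type*} [AddCommGroup M] (g : ℤ → M) (n : ℤ) :
    ∑ j ∈ Ico 0 n, ∑ l ∈ Ico 0 n, g (j - l)
      = ∑ m ∈ Icc (-n + 1) (n - 1), (n - |m|) • g m := by
  rw [sum_congr rfl fun j hj => sum_Ico_sub_eq_sum_Icc_ite g hj, sum_comm]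
  refine sum_congr rfl fun m hm => ?_
  rw [← card_filter_sub_mem_Ico n m hm, sum_ite, sum_const_zero, add_zero, sum_const,
    natCast_zsmul]

theorem Fin.sum_univ_sum_univ_sub_eq_sum_Icc_zsmul {M : Type*} [AddCommGroup M] (g : ℤ → M)
    (n : ℕ) :
    ∑ j : Fin n, ∑ l : Fin n, g (j - l)
      = ∑ m ∈ Icc (-(n : ℤ) + 1) (n - 1), ((n : ℤ) - |m|) • g m := by
  rw [Fin.sum_univ_intCast_eq_sum_Ico (fun j => ∑ l : Fin n, g (j - l)),
    ← sum_Ico_sum_Ico_sub_eq_sum_Icc_zsmul]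
  exact sum_congr rfl fun j _ => Fin.sum_univ_intCast_eq_sum_Ico (fun l => g (j - l)) n

theorem dft_diagonal_of_compression_eq_cesaro_mean_general
    (a : ℝ → ℂ)
    (F : lp (fun _ : ℤ => ℂ) 2 ≃ₗᵢ[ℂ] Lp ℂ 2 μ2π)
    (hF : ∀ k : ℤ, (F (lp.single 2 k (1 : ℂ)) : ℝ → ℂ)
      =ᵐ[μ2π] fun x => Complex.exp (Complex.I * k * x) / Real.sqrt (2 * Real.pi))
    (A : lp (fun _ : ℤ => ℂ) 2 →L[ℂ] lp (fun _ : ℤ => ℂ) 2)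
    (hA : ∀ ψ, (F (A ψ) : ℝ → ℂ) =ᵐ[μ2π] fun x => a x * (F ψ : ℝ → ℂ) x)
    (n : ℕ) :
    ∀ k : Fin n,
      (dftMat n * compressMat A n * (dftMat n)ᴴ) k k
        = ∑ m ∈ Finset.Icc (-(n : ℤ) + 1) ((n : ℤ) - 1),
            (((((n : ℝ) - abs (m : ℝ)) / n : ℝ)) : ℂ) *
              Complex.exp (Complex.I * m * ((2 * Real.pi * k / n : ℝ) : ℂ)) *
              ((1 / (2 * (Real.pi : ℂ))) *
                ∫ t, Complex.exp (-Complex.I * m * t) * a t ∂μ2π) := by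
  intro k
  set g : ℤ → ℂ := fun m => exp (2 * Real.pi * I * k * m / n) * fourierCoeffIco a m / n
  calc (dftMat n * compressMat A n * (dftMat n)ᴴ) k k
      = ∑ j : Fin n, ∑ l : Fin n, g (j - l) := by
        rw [dftMat_mul_mul_conjTranspose_apply_self]
        simp only [compressMat, inner_single_map_single_eq_fourierCoeffIco a F hF A hA, g]
        push_cast
        rfl
    _ = ∑ m ∈ Icc (-(n : ℤ) + 1) (n - 1), ((n : ℤ) - |m|) • g m :=
        Fin.sum_univ_sum_univ_sub_eq_sum_Icc_zsmul g n
    _ = _ := by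
        refine sum_congr rfl fun m _ => ?_
        simp only [g, fourierCoeffIco, zsmul_eq_mul]
        rw [← Int.cast_abs, ofReal_div, ofReal_sub, ofReal_intCast]
        push_cast
        ring_nf

theorem dft_diagonal_of_compression_eq_cesaro_mean
    (a : ℝ → ℂ) (ha_meas : Measurable a) (ha_bdd : ∃ C, ∀ x, ‖a x‖ ≤ C)
    (F : lp (fun _ : ℤ => ℂ) 2 ≃ₗᵢ[ℂ] Lp ℂ 2 μ2π)
    (hF : ∀ k : ℤ, (F (lp.single 2 k (1 : ℂ)) : ℝ → ℂ)
      =ᵐ[μ2π] fun x => Complex.exp (Complex.I * k * x) / Real.sqrt (2 * Real.pi))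
    (A : lp (fun _ : ℤ => ℂ) 2 →L[ℂ] lp (fun _ : ℤ => ℂ) 2)
    (hA : ∀ ψ, (F (A ψ) : ℝ → ℂ) =ᵐ[μ2π] fun x => a x * (F ψ : ℝ → ℂ) x)
    (n : ℕ) (hn : 1 ≤ n) :
    ∀ k : Fin n,
      (dftMat n * compressMat A n * (dftMat n)ᴴ) k k
        = ∑ m ∈ Finset.Icc (-(n : ℤ) + 1) ((n : ℤ) - 1),
            (((((n : ℝ) - abs (m : ℝ)) / n : ℝ)) : ℂ) *
              Complex.exp (Complex.I * m * ((2 * Real.pi * k / n : ℝ) : ℂ)) *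
              ((1 / (2 * (Real.pi : ℂ))) *
                ∫ t, Complex.exp (-Complex.I * m * t) * a t ∂μ2π) :=
  dft_diagonal_of_compression_eq_cesaro_mean_general a F hF A hA n
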